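/- arXiv:2206.12442 — 2 statements merged into one kernel-verified Lean document; each statement's English description precedes it below -/
import Mathlib

section
/- If n ≥ 5, then there is no surjective group homomorphism from SL₂(𝔽_p) onto Sₙ for any prime p. -/
/-!
Since `SL₂(F)` is generated by transvections and, when `2` is invertible in `F`, every
transvection is a square, `SL₂(F)` has no nontrivial homomorphism to a group of exponent `2`.
For odd `p` this kills the sign character of a would-be quotient `Sₙ`; for `p = 2` the group
`SL₂(𝔽₂)` has order `6 < n!`.
-/

open MatrixGroups

namespace Matrix.SpecialLinearGroup

variable {F : Type*} [Field F]

theorem transvection_eq_sq [NeZero (2 : F)] {i j : Fin 2} (hij : i ≠ j) (c : F) :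
    transvection hij c = transvection hij (c / 2) ^ 2 := by
  rw [sq, ← transvection_add, add_halves]

theorem SL2.monoidHom_eq_one_of_sq_eq_one [NeZero (2 : F)] {G : Type*} [Group G]
    (hG : ∀ g : G, g ^ 2 = 1) (f : SL(2, F) →* G) : f = 1 := by
  ext A
  refine SL2.transvection_induction (fun A ↦ f A = 1) (fun i j hij c ↦ ?_)
    (fun A B hA hB ↦ by rw [map_mul, hA, hB, one_mul]) A
  rw [transvection_eq_sq, map_pow, hG]

theorem SL2.not_surjective_perm [NeZero (2 : F)] {α : Type*} [Fintype α] [DecidableEq α]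
    [Nontrivial α] (φ : SL(2, F) →* Equiv.Perm α) : ¬ Function.Surjective φ := by
  intro hφ
  obtain ⟨A, hA⟩ := (Equiv.Perm.sign_surjective α).comp hφ (-1)
  have hsign : Equiv.Perm.sign.comp φ = 1 := SL2.monoidHom_eq_one_of_sq_eq_one Int.units_sq _
  have : (-1 : ℤˣ) = 1 := hA.symm.trans (DFunLike.congr_fun hsign A)
  exact absurd this (by decide)

end Matrix.SpecialLinearGroup

/-- If `n ≥ 5`, there is no surjective group homomorphism from `SL₂(𝔽_p)` onto `Sₙ`
for any prime `p`. -/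
theorem stmt_1 (n p : ℕ) (hn : 5 ≤ n) (hp : p.Prime) :
    ¬ ∃ φ : Matrix.SpecialLinearGroup (Fin 2) (ZMod p) →* Equiv.Perm (Fin n),
      Function.Surjective φ := by
  have : Fact p.Prime := ⟨hp⟩
  rintro ⟨φ, hφ⟩
  obtain rfl | hp2 := eq_or_ne p 2
  · have hcard := Fintype.card_le_of_surjective φ hφ
    have h6 : Fintype.card SL(2, ZMod 2) = 6 := by decide
    rw [Fintype.card_perm, Fintype.card_fin, h6] at hcard
    have h120 : Nat.factorial 5 ≤ n.factorial := Nat.factorial_le hn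
    rw [show Nat.factorial 5 = 120 from rfl] at h120
    omega
  · have : Nontrivial (Fin n) := Fin.nontrivial_iff_two_le.mpr (by omega)
    have : NeZero (2 : ZMod p) := ⟨Ring.two_ne_zero (by rwa [ZMod.ringChar_zmod_n])⟩
    exact Matrix.SpecialLinearGroup.SL2.not_surjective_perm φ hφ
end

section
/- Let ζ be a primitive twelfth root of unity and let φ : SL₂(ℤ) → SL₂(ℤ[ζ]) be the homomorphism determined by φ(T) = [[ζ,0],[0,ζ⁻¹]] and φ(S) = [[−ζ³,1],[0,ζ³]], where T = [[1,1],[0,1]] and S = [[0,−1],[1,0]]. Then the image of φ equals { [[u, u·v],[0, u⁻¹]] : u a twelfth root of unity, v ∈ ℤζ ⊕ ℤζ³ }. -/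
/-!
Every element of the image is upper triangular with diagonal `(u, u⁻¹)` for a twelfth root of
unity `u`, and such matrices with upper-right entry `u v`, `v ∈ L := ℤζ ⊕ ℤζ³`, form a group:
the only thing to check is that `L` is stable under multiplication by `ζ²`, which holds because
`ζ⁴ = ζ² - 1` (the twelfth cyclotomic polynomial is `X⁴ - X² + 1`), so `ζ² · ζ³ = ζ³ - ζ`.
Since `S` and `T` generate `SL₂(ℤ)`, the image lies in this group. Conversely the group is
generated by `φ(T)` and the two unipotent matrices `φ(T²ST) = [[1,ζ],[0,1]]` and
`φ(T³S) = [[1,ζ³],[0,1]]`.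
-/

open Matrix

def stmtT : Matrix.SpecialLinearGroup (Fin 2) ℤ :=
  ⟨!![1, 1; 0, 1], by norm_num [Matrix.det_fin_two_of]⟩

def stmtS : Matrix.SpecialLinearGroup (Fin 2) ℤ :=
  ⟨!![0, -1; 1, 0], by norm_num [Matrix.det_fin_two_of]⟩

noncomputable abbrev Zzeta12 : Type := NumberField.RingOfIntegers (CyclotomicField 12 ℚ)

section PowPred

variable {M : Type*} [Monoid M] {n : ℕ} {u : M}

lemma pow_pred_pow_eq_one (hu : u ^ n = 1) : (u ^ (n - 1)) ^ n = 1 := by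
  rw [← pow_mul, mul_comm, pow_mul, hu, one_pow]

lemma pow_pred_pow_pred [NeZero n] (hu : u ^ n = 1) : (u ^ (n - 1)) ^ (n - 1) = u :=
  calc (u ^ (n - 1)) ^ (n - 1) = (u ^ (n - 1)) ^ (n - 1) * (u ^ (n - 1) * u) := by
        rw [pow_sub_one_mul (NeZero.ne n), hu, mul_one]
    _ = (u ^ (n - 1)) ^ n * u := by rw [← mul_assoc, pow_sub_one_mul (NeZero.ne n)]
    _ = u := by rw [pow_pred_pow_eq_one hu, one_mul]

end PowPred

section DiagUnipotent

variable {R : Type*} [CommRing R]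

/-- Closure under products: `[[u, u v], [0, u⁻¹]] * [[u', u' v'], [0, u'⁻¹]]` has
upper-right entry `u u' (v' + u'⁻² v)`, and `u'⁻¹ = u' ^ (n - 1)` is again an `n`-th root of unity. -/
def diagUnipotentSubgroup (n : ℕ) [NeZero n] (L : AddSubgroup R)
    (hL : ∀ u : R, u ^ n = 1 → ∀ v ∈ L, u ^ 2 * v ∈ L) : Subgroup (GL (Fin 2) R) where
  carrier := {g | ∃ u v : R, u ^ n = 1 ∧ v ∈ L ∧
    (g : Matrix (Fin 2) (Fin 2) R) = !![u, u * v; 0, u ^ (n - 1)]}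
  one_mem' := ⟨1, 0, one_pow n, L.zero_mem, by simp [one_fin_two]⟩
  mul_mem' := by
    rintro g g' ⟨u, v, hu, hv, hg⟩ ⟨u', v', hu', hv', hg'⟩
    refine ⟨u * u', v' + (u' ^ (n - 1)) ^ 2 * v, by rw [mul_pow, hu, hu', one_mul],
      L.add_mem hv' (hL _ (pow_pred_pow_eq_one hu') v hv), ?_⟩
    have hinv : u' ^ (n - 1) * u' = 1 := (pow_sub_one_mul (NeZero.ne n) u').trans hu'
    rw [Units.val_mul, hg, hg', mul_fin_two]
    ext i j
    fin_cases i <;> fin_cases j <;> simp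
    · linear_combination -(u * v * u' ^ (n - 1)) * hinv
    · rw [mul_pow]
  inv_mem' := by
    rintro g ⟨u, v, hu, hv, hg⟩
    refine ⟨u ^ (n - 1), -(u ^ 2 * v), pow_pred_pow_eq_one hu, L.neg_mem (hL u hu v hv),
      Units.inv_eq_of_mul_eq_one_right ?_⟩
    have hinv : u ^ (n - 1) * u = 1 := (pow_sub_one_mul (NeZero.ne n) u).trans hu
    rw [hg, mul_fin_two, pow_pred_pow_pred hu]
    ext i j
    fin_cases i <;> fin_cases j <;> simp
    · linear_combination hinv
    · linear_combination -(u ^ 2 * v) * hinv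
    · exact hinv

end DiagUnipotent

lemma fin_two_diag_pow {R : Type*} [CommRing R] (x y : R) (k : ℕ) :
    !![x, 0; 0, y] ^ k = !![x ^ k, 0; 0, y ^ k] := by
  simpa [diagonal_fin_two] using diagonal_pow ![x, y] k

lemma pow_mul_mem_of_mul_mem {M : Type*} [Monoid M] {S : Set M} {x : M}
    (hx : ∀ v ∈ S, x * v ∈ S) (k : ℕ) {v : M} (hv : v ∈ S) : x ^ k * v ∈ S := by
  simpa [mul_left_iterate] using Set.MapsTo.iterate hx k hv

section SixthPowerNegOne

variable {R : Type*} [CommRing R] {ζ : R}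

lemma image_TTST_eq (h6 : ζ ^ 6 = -1) :
    !![ζ, 0; 0, ζ ^ 11] * !![ζ, 0; 0, ζ ^ 11] * !![-ζ ^ 3, 1; 0, ζ ^ 3] * !![ζ, 0; 0, ζ ^ 11]
      = !![1, ζ; 0, 1] := by
  have h12 : ζ ^ 12 = 1 := by linear_combination (ζ ^ 6 - 1) * h6
  ext i j
  fin_cases i <;> fin_cases j <;> simp <;> ring_nf
  · linear_combination -h6
  · linear_combination ζ * h12
  · linear_combination (ζ ^ 24 + ζ ^ 12 + 1) * h12

lemma image_TTTS_eq (h6 : ζ ^ 6 = -1) :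
    !![ζ, 0; 0, ζ ^ 11] * !![ζ, 0; 0, ζ ^ 11] * !![ζ, 0; 0, ζ ^ 11] * !![-ζ ^ 3, 1; 0, ζ ^ 3]
      = !![1, ζ ^ 3; 0, 1] := by
  have h12 : ζ ^ 12 = 1 := by linear_combination (ζ ^ 6 - 1) * h6
  ext i j
  fin_cases i <;> fin_cases j <;> simp <;> ring_nf
  · linear_combination -h6
  · linear_combination (ζ ^ 24 + ζ ^ 12 + 1) * h12

lemma image_S_eq (h6 : ζ ^ 6 = -1) :
    !![-ζ ^ 3, 1; 0, ζ ^ 3] = !![-ζ ^ 3, -ζ ^ 3 * ζ ^ 3; 0, (-ζ ^ 3) ^ 11] := by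
  have h12 : ζ ^ 12 = 1 := by linear_combination (ζ ^ 6 - 1) * h6
  ext i j
  fin_cases i <;> fin_cases j <;> simp <;> ring_nf
  · linear_combination h6
  · linear_combination ζ ^ 3 * h6 + ζ ^ 9 * (ζ ^ 12 + 1) * h12

end SixthPowerNegOne

section PrimitiveRoot12

variable {R : Type*} [CommRing R] [IsDomain R] {ζ : R}

lemma IsPrimitiveRoot.pow_six_eq_neg_one (hζ : IsPrimitiveRoot ζ 12) : ζ ^ 6 = -1 :=
  (hζ.pow_of_dvd (by norm_num) (by norm_num : 6 ∣ 12)).eq_neg_one_of_two_right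

lemma IsPrimitiveRoot.pow_four_eq_sq_sub_one (hζ : IsPrimitiveRoot ζ 12) : ζ ^ 4 = ζ ^ 2 - 1 := by
  have hfactor : (ζ ^ 2 + 1) * (ζ ^ 4 - ζ ^ 2 + 1) = 0 := by
    linear_combination hζ.pow_six_eq_neg_one
  have hζ4 : ζ ^ 4 ≠ 1 := hζ.pow_ne_one_of_pos_of_lt (by norm_num) (by norm_num)
  have hsq : ζ ^ 2 + 1 ≠ 0 := fun h => hζ4 (by linear_combination (ζ ^ 2 - 1) * h)
  linear_combination (mul_eq_zero.mp hfactor).resolve_left hsq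

lemma IsPrimitiveRoot.sq_mul_mem_span (hζ : IsPrimitiveRoot ζ 12) {v : R}
    (hv : v ∈ Submodule.span ℤ {ζ, ζ ^ 3}) : ζ ^ 2 * v ∈ Submodule.span ℤ {ζ, ζ ^ 3} := by
  set L := Submodule.span ℤ ({ζ, ζ ^ 3} : Set R)
  have hstable : L ≤ L.comap (LinearMap.mulLeft ℤ (ζ ^ 2)) := by
    rw [Submodule.span_le, Set.pair_subset_iff]
    constructor
    · show ζ ^ 2 * ζ ∈ L
      rw [← pow_succ]
      exact Submodule.subset_span (by simp)
    · show ζ ^ 2 * ζ ^ 3 ∈ L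
      rw [show ζ ^ 2 * ζ ^ 3 = ζ ^ 3 - ζ by linear_combination ζ * hζ.pow_four_eq_sq_sub_one]
      exact L.sub_mem (Submodule.subset_span (by simp)) (Submodule.subset_span (by simp))
  exact hstable hv

lemma IsPrimitiveRoot.sq_mul_mem_span_of_pow_eq_one (hζ : IsPrimitiveRoot ζ 12) {u : R}
    (hu : u ^ 12 = 1) {v : R} (hv : v ∈ Submodule.span ℤ {ζ, ζ ^ 3}) :
    u ^ 2 * v ∈ Submodule.span ℤ {ζ, ζ ^ 3} := by
  obtain ⟨k, -, rfl⟩ := hζ.eq_pow_of_pow_eq_one hu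
  rw [← pow_mul, pow_mul']
  exact pow_mul_mem_of_mul_mem (fun _ => hζ.sq_mul_mem_span) k hv

end PrimitiveRoot12

section Image

open GeneralLinearGroup

variable {R : Type*} [CommRing R] [IsDomain R] {ζ : R}
  {φ : Matrix.SpecialLinearGroup (Fin 2) ℤ →* GL (Fin 2) R}

lemma map_TTST_eq_upperRightHom (hζ : IsPrimitiveRoot ζ 12)
    (hT : (φ stmtT : Matrix (Fin 2) (Fin 2) R) = !![ζ, 0; 0, ζ ^ 11])
    (hS : (φ stmtS : Matrix (Fin 2) (Fin 2) R) = !![-ζ ^ 3, 1; 0, ζ ^ 3]) :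
    φ (stmtT * stmtT * stmtS * stmtT) = upperRightHom ζ :=
  Units.ext <| by simpa [hT, hS] using image_TTST_eq hζ.pow_six_eq_neg_one

lemma map_TTTS_eq_upperRightHom (hζ : IsPrimitiveRoot ζ 12)
    (hT : (φ stmtT : Matrix (Fin 2) (Fin 2) R) = !![ζ, 0; 0, ζ ^ 11])
    (hS : (φ stmtS : Matrix (Fin 2) (Fin 2) R) = !![-ζ ^ 3, 1; 0, ζ ^ 3]) :
    φ (stmtT * stmtT * stmtT * stmtS) = upperRightHom (ζ ^ 3) :=
  Units.ext <| by simpa [hT, hS] using image_TTTS_eq hζ.pow_six_eq_neg_one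

lemma range_le_diagUnipotentSubgroup (hζ : IsPrimitiveRoot ζ 12)
    (hT : (φ stmtT : Matrix (Fin 2) (Fin 2) R) = !![ζ, 0; 0, ζ ^ 11])
    (hS : (φ stmtS : Matrix (Fin 2) (Fin 2) R) = !![-ζ ^ 3, 1; 0, ζ ^ 3]) :
    φ.range ≤ diagUnipotentSubgroup 12 (Submodule.span ℤ {ζ, ζ ^ 3}).toAddSubgroup
      (fun _ hu _ hv => hζ.sq_mul_mem_span_of_pow_eq_one hu hv) := by
  have h12 := hζ.pow_eq_one
  rw [MonoidHom.range_eq_map, ← SpecialLinearGroup.SL2Z_generators, MonoidHom.map_closure,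
    Subgroup.closure_le, Set.image_pair, Set.pair_subset_iff]
  constructor
  · refine ⟨-ζ ^ 3, ζ ^ 3, by rw [show (-ζ ^ 3) ^ 12 = (ζ ^ 12) ^ 3 by ring, h12, one_pow],
      Submodule.subset_span (by simp), ?_⟩
    change (φ stmtS : Matrix (Fin 2) (Fin 2) R) = _
    rw [hS, image_S_eq hζ.pow_six_eq_neg_one]
  · refine ⟨ζ, 0, h12, zero_mem _, ?_⟩
    change (φ stmtT : Matrix (Fin 2) (Fin 2) R) = _
    simp [hT]

lemma diag_unipotent_mem_range (hζ : IsPrimitiveRoot ζ 12)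
    (hT : (φ stmtT : Matrix (Fin 2) (Fin 2) R) = !![ζ, 0; 0, ζ ^ 11])
    (hS : (φ stmtS : Matrix (Fin 2) (Fin 2) R) = !![-ζ ^ 3, 1; 0, ζ ^ 3])
    {u v : R} (hu : u ^ 12 = 1) (hv : v ∈ Submodule.span ℤ {ζ, ζ ^ 3}) :
    !![u, u * v; 0, u ^ 11] ∈ Set.range fun γ => (φ γ : Matrix (Fin 2) (Fin 2) R) := by
  obtain ⟨k, -, rfl⟩ := hζ.eq_pow_of_pow_eq_one hu
  obtain ⟨a, b, rfl⟩ := Submodule.mem_span_pair.mp hv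
  set A := stmtT * stmtT * stmtS * stmtT
  set B := stmtT * stmtT * stmtT * stmtS
  have hunipotent : φ (A ^ a * B ^ b) = upperRightHom (a • ζ + b • ζ ^ 3) := by
    rw [map_mul, map_zpow, map_zpow, map_TTST_eq_upperRightHom hζ hT hS,
      map_TTTS_eq_upperRightHom hζ hT hS, AddChar.map_add_eq_mul, AddChar.map_zsmul_eq_zpow,
      AddChar.map_zsmul_eq_zpow]
  refine ⟨stmtT ^ k * (A ^ a * B ^ b), ?_⟩
  simp only [map_mul, Units.val_mul, hunipotent, map_pow, Units.val_pow_eq_pow_val, hT,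
    fin_two_diag_pow, upperRightHom_apply, mul_fin_two, mul_one, mul_zero, zero_mul, add_zero,
    zero_add]
  rw [← pow_mul, ← pow_mul, mul_comm 11 k]

end Image

/-- Let `ζ` be a primitive twelfth root of unity in `𝒪 = ℤ[ζ₁₂]` and let
`φ : SL₂(ℤ) → SL₂(𝒪)` (realized in the units of the `2×2` matrix ring over `𝒪`) satisfy
`φ(T) = [[ζ,0],[0,ζ⁻¹]]` and `φ(S) = [[-ζ³,1],[0,ζ³]]` (here `ζ⁻¹ = ζ¹¹`).  Then the image
of `φ` is `{ [[u, u·v],[0, u⁻¹]] : u¹² = 1, v ∈ ℤζ ⊕ ℤζ³ }`. -/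
theorem stmt_5 (ζ : Zzeta12) (hζ : IsPrimitiveRoot ζ 12)
    (φ : Matrix.SpecialLinearGroup (Fin 2) ℤ →* (Matrix (Fin 2) (Fin 2) Zzeta12)ˣ)
    (hT : ((φ stmtT : (Matrix (Fin 2) (Fin 2) Zzeta12)ˣ) : Matrix (Fin 2) (Fin 2) Zzeta12)
      = !![ζ, 0; 0, ζ ^ 11])
    (hS : ((φ stmtS : (Matrix (Fin 2) (Fin 2) Zzeta12)ˣ) : Matrix (Fin 2) (Fin 2) Zzeta12)
      = !![-ζ ^ 3, 1; 0, ζ ^ 3]) :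
    Set.range (fun γ =>
        ((φ γ : (Matrix (Fin 2) (Fin 2) Zzeta12)ˣ) : Matrix (Fin 2) (Fin 2) Zzeta12))
      = { M : Matrix (Fin 2) (Fin 2) Zzeta12 | ∃ u v : Zzeta12, u ^ 12 = 1 ∧
          v ∈ Submodule.span ℤ ({ζ, ζ ^ 3} : Set Zzeta12) ∧ M = !![u, u * v; 0, u ^ 11] } := by
  refine Set.Subset.antisymm ?_ ?_
  · rintro _ ⟨γ, rfl⟩
    exact range_le_diagUnipotentSubgroup hζ hT hS ⟨γ, rfl⟩
  · rintro _ ⟨u, v, hu, hv, rfl⟩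
    exact diag_unipotent_mem_range hζ hT hS hu hv
end
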